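/- arXiv:2404.19724 — 4 statements merged into one kernel-verified Lean document; each statement's English description precedes it below -/
import Mathlib

section
/- Unrolling Lemma: Let M be a finitely-branching MDP with absorbing terminal state ⊥, let σ be a state, and suppose Pr_term(σ) ≥ p. Then for every ε > 0 there exists k ∈ ℕ such that for every scheduler 𝔰, ℙ_{𝔰,σ}(the run visits ⊥ within the first k steps) ≥ p − ε. -/
/-!
A compactness (König) argument. If no horizon worked, then for every `n` some scheduler `𝔰ₙ`
would reach `⊥` within `n` steps with probability below `p - ε`. Since every state has finitely
many actions, each with finite support, the `𝔰ₙ` have a limit `𝔰` along an ultrafilter that,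
for every `k`, agrees with infinitely many `𝔰ₙ` on the first `k` steps. Then `𝔰` reaches `⊥`
within `k` steps with probability below `p - ε` for every `k`, contradicting `Pr_term(σ) ≥ p`.
-/

open scoped ENNReal Classical

/-- A finitely-branching MDP on a state space `S`: each state has a nonempty finite
set of available actions, each a finitely-supported PMF on `S`. -/
structure MDP (S : Type) where
  act : S → Finset (PMF S)
  act_nonempty : ∀ s, (act s).Nonempty
  act_finSupp : ∀ s, ∀ μ ∈ act s, (μ : PMF S).support.Finite

/-- A scheduler maps every history `(s₀, …, sₙ)` (given as the list of earlier
states `s₀, …, sₙ₋₁` together with the current state `sₙ`) to an available action. -/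
structure Scheduler {S : Type} (M : MDP S) where
  choose : List S → S → PMF S
  choose_mem : ∀ hist s, choose hist s ∈ M.act s

namespace MDP

variable {S : Type}

/-- Reachability: `s'` is reachable from `σ` via a finite path each of whose steps
lies in the support of some available action. -/
inductive Reach (M : MDP S) (σ : S) : S → Prop
  | refl : Reach M σ σ
  | step {s s' : S} (μ : PMF S) : Reach M σ s → μ ∈ M.act s → s' ∈ μ.support → Reach M σ s'

/-- Probability that the run (currently at `s`, with past history `hist`) visits the
set `T` within the next `k` steps, under scheduler `𝔰`. -/
noncomputable def hitProbAux (M : MDP S) (𝔰 : Scheduler M) (T : Set S) :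
    ℕ → List S → S → ℝ≥0∞
  | 0, _, s => if s ∈ T then 1 else 0
  | k + 1, hist, s =>
      if s ∈ T then 1
      else ∑' s', (𝔰.choose hist s) s' * hitProbAux M 𝔰 T k (hist ++ [s]) s'

/-- Probability that the run started at `σ` visits `T` within the first `k` steps. -/
noncomputable def hitProbWithin (M : MDP S) (𝔰 : Scheduler M) (σ : S) (T : Set S)
    (k : ℕ) : ℝ≥0∞ :=
  hitProbAux M 𝔰 T k [] σ

/-- Probability that the run started at `σ` ever visits `T`, under scheduler `𝔰`. -/
noncomputable def hitProb (M : MDP S) (𝔰 : Scheduler M) (σ : S) (T : Set S) : ℝ≥0∞ :=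
  ⨆ k, hitProbWithin M 𝔰 σ T k

/-- The terminal state `term` is absorbing: the only action there is the Dirac PMF. -/
def Absorbing (M : MDP S) (term : S) : Prop :=
  M.act term = {PMF.pure term}

/-- Termination probability: infimum over schedulers of the probability of visiting
the terminal state. -/
noncomputable def PrTerm (M : MDP S) (term σ : S) : ℝ≥0∞ :=
  ⨅ 𝔰 : Scheduler M, hitProb M 𝔰 σ {term}

/-- Almost-sure termination from `σ`. -/
def AST (M : MDP S) (term σ : S) : Prop := PrTerm M term σ = 1

/-- Mass a PMF assigns to a set. -/
noncomputable def mass (μ : PMF S) (A : Set S) : ℝ≥0∞ := ∑' a : A, μ a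

/-- Expected value of a real-valued function under a (finitely supported) PMF. -/
noncomputable def expect (μ : PMF S) (V : S → ℝ) : ℝ := ∑' s, (μ s).toReal * V s

/-- `V` is a supermartingale function on the states reachable from `σ`. -/
def SupermartingaleOn (M : MDP S) (σ : S) (V : S → ℝ) : Prop :=
  ∀ s, M.Reach σ s → ∀ μ ∈ M.act s, expect μ V ≤ V s

/-- `(Ψ, p)` is a stochastic invariant for initial state `σ`: under every scheduler the
probability that the run ever leaves `Ψ` is at most `p`. -/
def StochasticInvariant (M : MDP S) (σ : S) (Ψ : Set S) (p : ℝ) : Prop :=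
  ⨆ 𝔰 : Scheduler M, hitProb M 𝔰 σ Ψᶜ ≤ ENNReal.ofReal p

end MDP

theorem Ultrafilter.exists_eventually_eq_of_mem_finset {ι α : Type*} (U : Ultrafilter ι)
    {A : Finset α} {f : ι → α} (hf : ∀ i, f i ∈ A) : ∃ a ∈ A, ∀ᶠ i in U, f i = a := by
  have hcover : (⋃ a ∈ (A : Set α), {i | f i = a}) = Set.univ :=
    Set.eq_univ_of_forall fun i => Set.mem_biUnion (t := fun a => {i | f i = a}) (hf i) rfl
  exact (Ultrafilter.finite_biUnion_mem_iff A.finite_toSet).1 (hcover ▸ Filter.univ_mem)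

namespace Scheduler

variable {S : Type} {M : MDP S}

/-- `𝔰` and `𝔱` choose the same actions on the histories of length less than `k` that extend
`(hist, s)` and are reachable under `𝔰`. -/
def Agree (𝔰 𝔱 : Scheduler M) : ℕ → List S → S → Prop
  | 0, _, _ => True
  | k + 1, hist, s =>
      𝔰.choose hist s = 𝔱.choose hist s ∧
        ∀ s' ∈ (𝔰.choose hist s).support, 𝔰.Agree 𝔱 k (hist ++ [s]) s'

/-- At each history, the action chosen `U`-almost always; it exists because `Act(s)` is finite. -/
noncomputable def ultralimit (U : Ultrafilter ℕ) (𝔰 : ℕ → Scheduler M) : Scheduler M where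
  choose hist s :=
    (U.exists_eventually_eq_of_mem_finset fun n => (𝔰 n).choose_mem hist s).choose
  choose_mem hist s :=
    (U.exists_eventually_eq_of_mem_finset fun n => (𝔰 n).choose_mem hist s).choose_spec.1

theorem eventually_choose_eq_ultralimit (U : Ultrafilter ℕ) (𝔰 : ℕ → Scheduler M)
    (hist : List S) (s : S) : ∀ᶠ n in U, (𝔰 n).choose hist s = (ultralimit U 𝔰).choose hist s :=
  (U.exists_eventually_eq_of_mem_finset fun n => (𝔰 n).choose_mem hist s).choose_spec.2

/-- The finite supports of the actions make the tree of histories finitely branching, so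
agreement to any finite depth is a finite intersection of `U`-large sets. -/
theorem eventually_agree_ultralimit (U : Ultrafilter ℕ) (𝔰 : ℕ → Scheduler M) :
    ∀ k hist s, ∀ᶠ n in U, (ultralimit U 𝔰).Agree (𝔰 n) k hist s
  | 0, _, _ => Filter.Eventually.of_forall fun _ => trivial
  | k + 1, hist, s => by
    set 𝔱 := ultralimit U 𝔰
    have hsupp : (𝔱.choose hist s).support.Finite := M.act_finSupp s _ (𝔱.choose_mem hist s)
    filter_upwards [eventually_choose_eq_ultralimit U 𝔰 hist s,
      (Filter.eventually_all_finite hsupp).2 fun s' _ =>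
        eventually_agree_ultralimit U 𝔰 k (hist ++ [s]) s'] with n hchoose hsucc
    exact ⟨hchoose.symm, hsucc⟩

end Scheduler

namespace MDP

variable {S : Type} {M : MDP S}

theorem hitProbAux_congr_of_agree {𝔰 𝔱 : Scheduler M} (T : Set S) :
    ∀ {k hist s}, 𝔰.Agree 𝔱 k hist s → hitProbAux M 𝔰 T k hist s = hitProbAux M 𝔱 T k hist s
  | 0, _, _, _ => rfl
  | k + 1, hist, s, ⟨hchoose, hsucc⟩ => by
    simp only [hitProbAux, ← hchoose]
    congr 1
    refine tsum_congr fun s' => ?_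
    by_cases hs' : s' ∈ (𝔰.choose hist s).support
    · rw [hitProbAux_congr_of_agree T (hsucc s' hs')]
    · rw [PMF.apply_eq_zero_iff _ _ |>.2 hs', zero_mul, zero_mul]

theorem hitProbAux_le_succ (𝔰 : Scheduler M) (T : Set S) :
    ∀ k hist s, hitProbAux M 𝔰 T k hist s ≤ hitProbAux M 𝔰 T (k + 1) hist s
  | 0, _, s => by
    simp only [hitProbAux]
    split_ifs <;> simp
  | k + 1, hist, s => by
    rw [hitProbAux, hitProbAux]
    split_ifs
    · exact le_rfl
    · exact ENNReal.tsum_le_tsum fun s' => mul_le_mul_right (hitProbAux_le_succ 𝔰 T k _ _) _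

theorem hitProbWithin_mono (𝔰 : Scheduler M) (σ : S) (T : Set S) :
    Monotone (hitProbWithin M 𝔰 σ T) :=
  monotone_nat_of_le_succ fun k => hitProbAux_le_succ 𝔰 T k [] σ

theorem exists_hitProb_le_of_forall_hitProbWithin_le (σ : S) (T : Set S) {c : ℝ≥0∞}
    (h : ∀ n, ∃ 𝔰 : Scheduler M, hitProbWithin M 𝔰 σ T n ≤ c) :
    ∃ 𝔰 : Scheduler M, hitProb M 𝔰 σ T ≤ c := by
  choose 𝔰 h𝔰 using h
  let U := Ultrafilter.of (Filter.atTop : Filter ℕ)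
  refine ⟨Scheduler.ultralimit U 𝔰, iSup_le fun k => ?_⟩
  have hlarge : ∀ᶠ n in U, k ≤ n := Ultrafilter.of_le _ (Filter.eventually_ge_atTop k)
  obtain ⟨n, hkn, hagree⟩ :=
    (hlarge.and (Scheduler.eventually_agree_ultralimit U 𝔰 k [] σ)).exists
  calc hitProbWithin M (Scheduler.ultralimit U 𝔰) σ T k
      = hitProbWithin M (𝔰 n) σ T k := hitProbAux_congr_of_agree T hagree
    _ ≤ hitProbWithin M (𝔰 n) σ T n := hitProbWithin_mono (𝔰 n) σ T hkn
    _ ≤ c := h𝔰 n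

theorem iInf_hitProb_eq_iSup_iInf_hitProbWithin (σ : S) (T : Set S) :
    ⨅ 𝔰 : Scheduler M, hitProb M 𝔰 σ T = ⨆ k, ⨅ 𝔰 : Scheduler M, hitProbWithin M 𝔰 σ T k := by
  refine le_antisymm (le_of_forall_gt_imp_ge_of_dense fun c hc => ?_)
    (iSup_iInf_le_iInf_iSup fun k 𝔰 => hitProbWithin M 𝔰 σ T k)
  have hlt : ∀ n, ∃ 𝔰 : Scheduler M, hitProbWithin M 𝔰 σ T n ≤ c := fun n =>
    have ⟨𝔰, h𝔰⟩ := iInf_lt_iff.1 ((le_iSup _ n).trans_lt hc)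
    ⟨𝔰, h𝔰.le⟩
  obtain ⟨𝔰, h𝔰⟩ := exists_hitProb_le_of_forall_hitProbWithin_le σ T hlt
  exact (iInf_le _ 𝔰).trans h𝔰

end MDP

theorem unrolling_lemma_general {S : Type} (M : MDP S) (term σ : S) (p : ℝ)
    (hp : ENNReal.ofReal p ≤ M.PrTerm term σ) :
    ∀ ε : ℝ, 0 < ε → ∃ k : ℕ, ∀ 𝔰 : Scheduler M,
      ENNReal.ofReal (p - ε) ≤ M.hitProbWithin 𝔰 σ {term} k := by
  intro ε hε
  by_cases hpε : p - ε ≤ 0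
  · exact ⟨0, fun 𝔰 => by simp [ENNReal.ofReal_of_nonpos hpε]⟩
  have hlt : ENNReal.ofReal (p - ε) < ⨆ k, ⨅ 𝔰 : Scheduler M, M.hitProbWithin 𝔰 σ {term} k := by
    rw [← MDP.iInf_hitProb_eq_iSup_iInf_hitProbWithin]
    exact lt_of_lt_of_le ((ENNReal.ofReal_lt_ofReal_iff (by linarith)).2 (by linarith)) hp
  obtain ⟨k, hk⟩ := lt_iSup_iff.1 hlt
  exact ⟨k, fun 𝔰 => hk.le.trans (iInf_le _ 𝔰)⟩

/-- **Unrolling Lemma.** If the termination probability from `σ` is at least `p`, then for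
every `ε > 0` there is a horizon `k` such that under every scheduler the run visits the
terminal state within the first `k` steps with probability at least `p - ε`. -/
theorem unrolling_lemma {S : Type} [Countable S] (M : MDP S) (term σ : S)
    (hterm : M.Absorbing term) (p : ℝ)
    (hp : ENNReal.ofReal p ≤ M.PrTerm term σ) :
    ∀ ε : ℝ, 0 < ε → ∃ k : ℕ, ∀ 𝔰 : Scheduler M,
      ENNReal.ofReal (p - ε) ≤ M.hitProbWithin 𝔰 σ {term} k :=
  unrolling_lemma_general M term σ p hp
end

section
/- Let M be a finitely-branching MDP with absorbing terminal state ⊥ and let σ be a state with Pr_term(σ) > 0. Then there exists N ∈ ℕ such that for every scheduler 𝔰 there is a finite path σ = s₀, s₁, …, sₘ = ⊥ with m ≤ N that is consistent with 𝔰, i.e., for every i < m the state sᵢ₊₁ lies in the support of the action 𝔰(s₀,…,sᵢ). -/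
open scoped ENNReal Classical

/-! If the termination probability is positive, every scheduler reaches `term` with positive
probability, hence along some consistent path of finite length. Schedulers form a product of
finite sets of actions, which is compact, and whether a scheduler admits a consistent path of
length at most `N` depends only on finitely many of its choices. The open sets of schedulers
admitting such a path, `N = 0, 1, …`, therefore form an increasing open cover of a compact
space, so one of them is already everything. -/

/-- König's lemma, as compactness of a product of finite discrete spaces. -/
theorem Pi.exists_forall_of_monotone_of_finitelyDetermined {ι : Type*} {X : ι → Type*}
    [∀ i, Finite (X i)] (P : ℕ → (∀ i, X i) → Prop) (hmono : ∀ x, Monotone (P · x))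
    (hdet : ∀ n x, P n x → ∃ F : Finset ι, ∀ y, (∀ i ∈ F, y i = x i) → P n y)
    (hcover : ∀ x, ∃ n, P n x) :
    ∃ N, ∀ x, P N x := by
  let _ : ∀ i, TopologicalSpace (X i) := fun _ => ⊥
  have : ∀ i, DiscreteTopology (X i) := fun _ => ⟨rfl⟩
  have hopen : ∀ n, IsOpen {x | P n x} := fun n => by
    refine isOpen_iff_forall_mem_open.2 fun x hx => ?_
    obtain ⟨F, hF⟩ := hdet n x hx
    exact ⟨Set.pi F fun i => {x i}, fun y hy => hF y fun i hi => hy i hi,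
      isOpen_set_pi F.finite_toSet fun _ _ => isOpen_discrete _, fun i _ => rfl⟩
  obtain ⟨N, hN⟩ := isCompact_univ.elim_directed_cover (fun n => {x | P n x}) hopen
    (fun x _ => Set.mem_iUnion.2 (hcover x))
    (Monotone.directed_le fun _ _ hmn x hx => hmono x hmn hx)
  exact ⟨N, fun x => hN (Set.mem_univ x)⟩

def Scheduler.ofChoice {S : Type} {M : MDP S} (c : ∀ p : List S × S, M.act p.2) :
    Scheduler M :=
  ⟨fun hist s => c (hist, s), fun hist s => (c (hist, s)).2⟩

namespace MDP

variable {S : Type} {M : MDP S}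

/-- The support of `hitProbAux M 𝔰 T k hist s`. -/
def CanHitWithin (𝔰 : Scheduler M) (T : Set S) : ℕ → List S → S → Prop
  | 0, _, s => s ∈ T
  | k + 1, hist, s =>
      s ∈ T ∨ ∃ s' ∈ (𝔰.choose hist s).support, CanHitWithin 𝔰 T k (hist ++ [s]) s'

variable {𝔰 : Scheduler M} {T : Set S}

theorem canHitWithin_of_hitProbAux_ne_zero {k : ℕ} {hist : List S} {s : S}
    (h : hitProbAux M 𝔰 T k hist s ≠ 0) : CanHitWithin 𝔰 T k hist s := by
  induction k generalizing hist s with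
  | zero =>
    by_contra hs
    simp [hitProbAux, show s ∉ T from hs] at h
  | succ k ih =>
    by_cases hs : s ∈ T
    · exact Or.inl hs
    rw [hitProbAux, if_neg hs] at h
    obtain ⟨s', hs'⟩ := not_forall.1 (mt ENNReal.tsum_eq_zero.2 h)
    obtain ⟨hμ, hrest⟩ := mul_ne_zero_iff.1 hs'
    exact Or.inr ⟨s', hμ, ih hrest⟩

theorem exists_canHitWithin_of_hitProb_ne_zero {σ : S} (h : hitProb M 𝔰 σ T ≠ 0) :
    ∃ k, CanHitWithin 𝔰 T k [] σ := by
  obtain ⟨k, hk⟩ := lt_iSup_iff.1 (pos_iff_ne_zero.2 h)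
  exact ⟨k, canHitWithin_of_hitProbAux_ne_zero hk.ne'⟩

theorem CanHitWithin.succ {k : ℕ} {hist : List S} {s : S} (h : CanHitWithin 𝔰 T k hist s) :
    CanHitWithin 𝔰 T (k + 1) hist s := by
  induction k generalizing hist s with
  | zero => exact Or.inl h
  | succ k ih =>
    rcases h with hs | ⟨s', hs', hrest⟩
    · exact Or.inl hs
    · exact Or.inr ⟨s', hs', ih hrest⟩

theorem monotone_canHitWithin (hist : List S) (s : S) :
    Monotone fun k => CanHitWithin 𝔰 T k hist s :=
  monotone_nat_of_le_succ fun _ => CanHitWithin.succ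

theorem CanHitWithin.exists_finset {k : ℕ} {hist : List S} {s : S}
    (h : CanHitWithin 𝔰 T k hist s) :
    ∃ F : Finset (List S × S), ∀ 𝔱 : Scheduler M,
      (∀ p ∈ F, 𝔱.choose p.1 p.2 = 𝔰.choose p.1 p.2) → CanHitWithin 𝔱 T k hist s := by
  induction k generalizing hist s with
  | zero => exact ⟨∅, fun _ _ => h⟩
  | succ k ih =>
    rcases h with hs | ⟨s', hs', hrest⟩
    · exact ⟨∅, fun _ _ => Or.inl hs⟩
    · obtain ⟨F, hF⟩ := ih hrest
      refine ⟨insert (hist, s) F, fun 𝔱 h𝔱 => Or.inr ⟨s', ?_, hF 𝔱 fun p hp => h𝔱 p ?_⟩⟩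
      · rwa [h𝔱 (hist, s) (Finset.mem_insert_self _ _)]
      · exact Finset.mem_insert_of_mem hp

theorem CanHitWithin.exists_path {k : ℕ} {hist : List S} {s : S}
    (h : CanHitWithin 𝔰 T k hist s) :
    ∃ m ≤ k, ∃ path : ℕ → S, path 0 = s ∧ path m ∈ T ∧ ∀ i < m, path (i + 1) ∈
      (𝔰.choose (hist ++ List.ofFn fun j : Fin i => path j) (path i)).support := by
  induction k generalizing hist s with
  | zero => exact ⟨0, le_rfl, fun _ => s, rfl, h, fun i hi => absurd hi i.not_lt_zero⟩
  | succ k ih =>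
    rcases h with hs | ⟨s', hs', hrest⟩
    · exact ⟨0, Nat.zero_le _, fun _ => s, rfl, hs, fun i hi => absurd hi i.not_lt_zero⟩
    obtain ⟨m, hm, path, h0, hT, hcons⟩ := ih hrest
    refine ⟨m + 1, by omega, fun | 0 => s | i + 1 => path i, rfl, hT, ?_⟩
    rintro (_ | i) hi
    · simpa [h0] using hs'
    · simpa [List.ofFn_succ] using hcons i (by omega)

theorem exists_uniform_bound_canHitWithin {hist : List S} {s : S}
    (h : ∀ 𝔰 : Scheduler M, ∃ k, CanHitWithin 𝔰 T k hist s) :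
    ∃ N, ∀ 𝔰 : Scheduler M, CanHitWithin 𝔰 T N hist s := by
  obtain ⟨N, hN⟩ := Pi.exists_forall_of_monotone_of_finitelyDetermined
    (fun k c => CanHitWithin (Scheduler.ofChoice c) T k hist s)
    (fun _ => monotone_canHitWithin hist s)
    (fun _ c hc => by
      obtain ⟨F, hF⟩ := hc.exists_finset
      exact ⟨F, fun c' hc' => hF _ fun p hp => congrArg Subtype.val (hc' p hp)⟩)
    (fun _ => h _)
  exact ⟨N, fun 𝔰 => hN fun p => ⟨𝔰.choose p.1 p.2, 𝔰.choose_mem p.1 p.2⟩⟩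

end MDP

theorem bounded_shortest_terminating_path_general {S : Type} (M : MDP S) (term σ : S)
    (hpos : 0 < M.PrTerm term σ) :
    ∃ N : ℕ, ∀ 𝔰 : Scheduler M, ∃ m : ℕ, m ≤ N ∧ ∃ path : ℕ → S,
      path 0 = σ ∧ path m = term ∧
      ∀ i < m, path (i + 1) ∈
        (𝔰.choose (List.ofFn (fun j : Fin i => path j)) (path i)).support := by
  have hreach (𝔰 : Scheduler M) : ∃ k, M.CanHitWithin 𝔰 {term} k [] σ :=
    MDP.exists_canHitWithin_of_hitProb_ne_zero (hpos.trans_le (iInf_le _ 𝔰)).ne'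
  obtain ⟨N, hN⟩ := MDP.exists_uniform_bound_canHitWithin hreach
  refine ⟨N, fun 𝔰 => ?_⟩
  obtain ⟨m, hm, path, h0, hT, hcons⟩ := (hN 𝔰).exists_path
  exact ⟨m, hm, path, h0, hT, fun i hi => by simpa using hcons i hi⟩

/-- If the termination probability from `σ` is positive, then there is a uniform bound `N`
such that every scheduler admits a consistent finite path from `σ` to the terminal state
of length at most `N`. -/
theorem bounded_shortest_terminating_path {S : Type} [Countable S] (M : MDP S) (term σ : S)
    (hterm : M.Absorbing term) (hpos : 0 < M.PrTerm term σ) :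
    ∃ N : ℕ, ∀ 𝔰 : Scheduler M, ∃ m : ℕ, m ≤ N ∧ ∃ path : ℕ → S,
      path 0 = σ ∧ path m = term ∧
      ∀ i < m, path (i + 1) ∈
        (𝔰.choose (List.ofFn (fun j : Fin i => path j)) (path i)).support :=
  bounded_shortest_terminating_path_general M term σ hpos
end

section
/- Soundness of the variant rule for AST: Let M be a finitely-branching MDP with absorbing terminal state ⊥ and initial state σ. Suppose there exist H ∈ ℕ, ε > 0 and a function U : S → ℕ such that U(⊥) = 0; 1 ≤ U(s) ≤ H for every s ∈ Reach(σ) with s ≠ ⊥; and for every s ∈ Reach(σ) with s ≠ ⊥ and every action μ ∈ Act(s), μ({s' : U(s') < U(s)}) ≥ ε. Then M is almost surely terminating from σ. -/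
open scoped ENNReal Classical

/-!
Under any scheduler, from every reachable state the run terminates within `H` steps with
probability at least `δ = min(ε, 1)^H`: each step decreases the variant with probability at
least `ε`, and `H` consecutive decreases must end in `⊥`, since the variant lies between `1`
and `H` elsewhere. Restarting this argument every `H` steps, the probability of not
terminating during the first `nH` steps is at most `(1 - δ)^n`, which tends to `0`.
-/

instance Scheduler.instNonempty {S : Type} (M : MDP S) : Nonempty (Scheduler M) :=
  ⟨⟨fun _ s => (M.act_nonempty s).choose, fun _ s => (M.act_nonempty s).choose_spec⟩⟩

theorem PMF.tsum_mul_one_sub {S : Type} (μ : PMF S) {h : S → ℝ≥0∞} (hle : ∀ s, h s ≤ 1) :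
    ∑' s, μ s * (1 - h s) = 1 - ∑' s, μ s * h s := by
  have hle_one : ∑' s, μ s * h s ≤ 1 :=
    calc ∑' s, μ s * h s ≤ ∑' s, μ s * 1 :=
          ENNReal.tsum_le_tsum fun s => by gcongr; exact hle s
      _ = 1 := by simp [μ.tsum_coe]
  refine ENNReal.eq_sub_of_add_eq (ne_top_of_le_ne_top ENNReal.one_ne_top hle_one) ?_
  rw [← ENNReal.tsum_add]
  calc ∑' s, (μ s * (1 - h s) + μ s * h s) = ∑' s, μ s * 1 := by
        simp only [← mul_add, tsub_add_cancel_of_le (hle _)]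
    _ = 1 := by simp [μ.tsum_coe]

namespace MDP

variable {S : Type} {M : MDP S}

theorem Reach.step_choose {σ s s' : S} (𝔰 : Scheduler M) (hist : List S) (hs : M.Reach σ s)
    (h : 𝔰.choose hist s s' ≠ 0) : M.Reach σ s' :=
  hs.step _ (𝔰.choose_mem hist s) ((PMF.mem_support_iff _ _).mpr h)

variable (𝔰 : Scheduler M) {T : Set S}

theorem hitProbAux_of_mem {s : S} (hs : s ∈ T) (k : ℕ) (hist : List S) :
    M.hitProbAux 𝔰 T k hist s = 1 := by
  cases k <;> simp [hitProbAux, hs]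

theorem hitProbAux_succ_of_notMem {s : S} (hs : s ∉ T) (k : ℕ) (hist : List S) :
    M.hitProbAux 𝔰 T (k + 1) hist s =
      ∑' s', 𝔰.choose hist s s' * M.hitProbAux 𝔰 T k (hist ++ [s]) s' := by
  simp [hitProbAux, hs]

theorem hitProbAux_le_one (k : ℕ) (hist : List S) (s : S) :
    M.hitProbAux 𝔰 T k hist s ≤ 1 := by
  induction k generalizing hist s with
  | zero => unfold hitProbAux; split <;> simp
  | succ k ih =>
    by_cases hs : s ∈ T
    · rw [hitProbAux_of_mem 𝔰 hs]
    · rw [hitProbAux_succ_of_notMem 𝔰 hs]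
      calc ∑' s', 𝔰.choose hist s s' * M.hitProbAux 𝔰 T k (hist ++ [s]) s'
          ≤ ∑' s', 𝔰.choose hist s s' * 1 :=
            ENNReal.tsum_le_tsum fun s' => by gcongr; exact ih _ _
        _ = 1 := by simp [(𝔰.choose hist s).tsum_coe]

theorem one_sub_hitProbAux_succ_of_notMem {s : S} (hs : s ∉ T) (k : ℕ) (hist : List S) :
    1 - M.hitProbAux 𝔰 T (k + 1) hist s =
      ∑' s', 𝔰.choose hist s s' * (1 - M.hitProbAux 𝔰 T k (hist ++ [s]) s') := by
  rw [PMF.tsum_mul_one_sub _ fun _ => hitProbAux_le_one 𝔰 _ _ _,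
    hitProbAux_succ_of_notMem 𝔰 hs]

/-- Markov-type composition: missing `T` for `j + m` steps means missing it for `j` steps and
then, from wherever the run is, for `m` more steps. -/
theorem one_sub_hitProbAux_add_le {σ : S} {m : ℕ} {c : ℝ≥0∞}
    (hm : ∀ hist s, M.Reach σ s → 1 - M.hitProbAux 𝔰 T m hist s ≤ c) (j : ℕ) (hist : List S)
    {s : S} (hs : M.Reach σ s) :
    1 - M.hitProbAux 𝔰 T (j + m) hist s ≤ (1 - M.hitProbAux 𝔰 T j hist s) * c := by
  induction j generalizing hist s with
  | zero =>
    by_cases hsT : s ∈ T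
    · simp [hitProbAux_of_mem 𝔰 hsT]
    · simpa [hitProbAux, hsT] using hm hist s hs
  | succ j ih =>
    by_cases hsT : s ∈ T
    · simp [hitProbAux_of_mem 𝔰 hsT]
    · rw [Nat.add_right_comm, one_sub_hitProbAux_succ_of_notMem 𝔰 hsT,
        one_sub_hitProbAux_succ_of_notMem 𝔰 hsT, ← ENNReal.tsum_mul_right]
      refine ENNReal.tsum_le_tsum fun s' => ?_
      by_cases h0 : 𝔰.choose hist s s' = 0
      · simp [h0]
      · rw [mul_assoc]
        gcongr
        exact ih _ (hs.step_choose 𝔰 hist h0)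

theorem one_sub_hitProbAux_mul_le {σ : S} {m : ℕ} {q : ℝ≥0∞}
    (hm : ∀ hist s, M.Reach σ s → 1 - M.hitProbAux 𝔰 T m hist s ≤ q) (n : ℕ) (hist : List S)
    {s : S} (hs : M.Reach σ s) :
    1 - M.hitProbAux 𝔰 T (n * m) hist s ≤ q ^ n := by
  induction n generalizing hist s with
  | zero => simp
  | succ n ih =>
    calc 1 - M.hitProbAux 𝔰 T ((n + 1) * m) hist s
        = 1 - M.hitProbAux 𝔰 T (m + n * m) hist s := by rw [Nat.succ_mul, Nat.add_comm]
      _ ≤ (1 - M.hitProbAux 𝔰 T m hist s) * q ^ n :=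
          one_sub_hitProbAux_add_le 𝔰 ih m hist hs
      _ ≤ q * q ^ n := by gcongr; exact hm hist s hs
      _ = q ^ (n + 1) := (pow_succ' q n).symm

theorem hitProb_eq_one_of_le_hitProbAux {σ : S} {m : ℕ} {δ : ℝ≥0∞} (hδ : δ ≠ 0)
    (hm : ∀ hist s, M.Reach σ s → δ ≤ M.hitProbAux 𝔰 T m hist s) :
    M.hitProb 𝔰 σ T = 1 := by
  refine le_antisymm (iSup_le fun k => hitProbAux_le_one 𝔰 _ _ _) ?_
  have hmiss : ∀ n : ℕ, 1 - M.hitProb 𝔰 σ T ≤ (1 - δ) ^ n := fun n =>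
    calc 1 - M.hitProb 𝔰 σ T ≤ 1 - M.hitProbWithin 𝔰 σ T (n * m) :=
          tsub_le_tsub_left (le_iSup (M.hitProbWithin 𝔰 σ T) (n * m)) 1
      _ ≤ (1 - δ) ^ n :=
          one_sub_hitProbAux_mul_le 𝔰 (fun hist s hs => tsub_le_tsub_left (hm hist s hs) 1)
            n [] Reach.refl
  have hlim : Filter.Tendsto (fun n : ℕ => (1 - δ) ^ n) Filter.atTop (nhds 0) :=
    ENNReal.tendsto_pow_atTop_nhds_zero_of_lt_one
      (ENNReal.sub_lt_self ENNReal.one_ne_top one_ne_zero hδ)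
  exact tsub_eq_zero_iff_le.mp (nonpos_iff_eq_zero.mp (ge_of_tendsto' hlim hmiss))

theorem pow_le_hitProbAux_of_variant {σ : S} {U : S → ℕ} {e : ℝ≥0∞}
    (he0 : e ≠ 0) (he1 : e ≤ 1)
    (hprog : ∀ s, M.Reach σ s → s ∉ T → ∀ μ ∈ M.act s, e ≤ mass μ {s' | U s' < U s})
    (k : ℕ) (hist : List S) {s : S} (hs : M.Reach σ s) (hUk : s ∉ T → U s ≤ k) :
    e ^ k ≤ M.hitProbAux 𝔰 T k hist s := by
  by_cases hsT : s ∈ T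
  · rw [hitProbAux_of_mem 𝔰 hsT]
    exact pow_le_one₀ zero_le he1
  have hdec := hprog s hs hsT _ (𝔰.choose_mem hist s)
  induction k generalizing hist s with
  | zero =>
    -- outside `T` the variant is positive, since a decrease from `0` would have mass `0 < e`
    have hempty : {s' | U s' < U s} = ∅ := by simp [Nat.le_zero.mp (hUk hsT)]
    simp [mass, hempty, he0] at hdec
  | succ k ih =>
    rw [hitProbAux_succ_of_notMem 𝔰 hsT]
    calc e ^ (k + 1) = e * e ^ k := pow_succ' e k
      _ ≤ mass (𝔰.choose hist s) {s' | U s' < U s} * e ^ k := by gcongr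
      _ = ∑' s' : {s' | U s' < U s}, 𝔰.choose hist s s' * e ^ k :=
          ENNReal.tsum_mul_right.symm
      _ ≤ ∑' s' : {s' | U s' < U s},
            𝔰.choose hist s s' * M.hitProbAux 𝔰 T k (hist ++ [s]) s' := by
        refine ENNReal.tsum_le_tsum fun ⟨s', hlt⟩ => ?_
        by_cases h0 : 𝔰.choose hist s s' = 0
        · simp [h0]
        · have hs' := hs.step_choose 𝔰 hist h0
          gcongr
          by_cases hs'T : s' ∈ T
          · rw [hitProbAux_of_mem 𝔰 hs'T]
            exact pow_le_one₀ zero_le he1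
          · exact ih _ hs' (fun _ => Nat.lt_succ_iff.mp (lt_of_lt_of_le hlt (hUk hsT))) hs'T
              (hprog s' hs' hs'T _ (𝔰.choose_mem _ s'))
      _ ≤ ∑' s', 𝔰.choose hist s s' * M.hitProbAux 𝔰 T k (hist ++ [s]) s' :=
        ENNReal.summable.tsum_le_tsum_of_inj Subtype.val Subtype.val_injective
          (fun _ _ => zero_le) (fun _ => le_rfl) ENNReal.summable

end MDP

open MDP in
theorem variant_rule_sound_general {S : Type} (M : MDP S) (term σ : S)
    (H : ℕ) (ε : ℝ) (hε : 0 < ε) (U : S → ℕ)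
    (hUbd : ∀ s, M.Reach σ s → s ≠ term → 1 ≤ U s ∧ U s ≤ H)
    (hprog : ∀ s, M.Reach σ s → s ≠ term → ∀ μ ∈ M.act s,
      ENNReal.ofReal ε ≤ MDP.mass μ {s' | U s' < U s}) :
    M.AST term σ := by
  set e : ℝ≥0∞ := min (ENNReal.ofReal ε) 1
  have he0 : e ≠ 0 := (lt_min (ENNReal.ofReal_pos.mpr hε) one_pos).ne'
  have hprog' : ∀ s, M.Reach σ s → s ∉ ({term} : Set S) → ∀ μ ∈ M.act s,
      e ≤ mass μ {s' | U s' < U s} := fun s hs hst μ hμ =>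
    (min_le_left _ _).trans (hprog s hs hst μ hμ)
  have hhit : ∀ 𝔰 : Scheduler M, M.hitProb 𝔰 σ {term} = 1 := fun 𝔰 =>
    hitProb_eq_one_of_le_hitProbAux 𝔰 (pow_ne_zero H he0) fun hist s hs =>
      pow_le_hitProbAux_of_variant 𝔰 he0 (min_le_right _ _) hprog' H hist hs
        fun hst => (hUbd s hs hst).2
  simp only [AST, PrTerm, hhit, iInf_const]

/-- **Soundness of the variant rule for AST** (McIver–Morgan). If there are a bound `H`,
an `ε > 0`, and a variant `U : S → ℕ` with `U(term) = 0`, `1 ≤ U(s) ≤ H` on reachable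
non-terminal states, and such that every action at a reachable non-terminal state decreases
`U` with probability at least `ε`, then `M` is almost surely terminating from `σ`. -/
theorem variant_rule_sound {S : Type} [Countable S] (M : MDP S) (term σ : S)
    (hterm : M.Absorbing term)
    (H : ℕ) (ε : ℝ) (hε : 0 < ε) (U : S → ℕ)
    (hU0 : U term = 0)
    (hUbd : ∀ s, M.Reach σ s → s ≠ term → 1 ≤ U s ∧ U s ≤ H)
    (hprog : ∀ s, M.Reach σ s → s ≠ term → ∀ μ ∈ M.act s,
      ENNReal.ofReal ε ≤ MDP.mass μ {s' | U s' < U s}) :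
    M.AST term σ :=
  variant_rule_sound_general M term σ H ε hε U hUbd hprog
end

section
/- Completeness of the martingale rule for AST: Let M be a finitely-branching MDP with absorbing terminal state ⊥ that is almost surely terminating from the initial state σ. Then there exist V : S → ℝ and U : S → ℕ such that (i) V(⊥) = 0 and V(s) > 0 for every s ∈ Reach(σ) with s ≠ ⊥; (ii) V is a supermartingale function on Reach(σ); (iii) U(⊥) = 0 and U(s) ≥ 1 for every s ∈ Reach(σ) with s ≠ ⊥; (iv) for every r ∈ ℝ the set {U(s) : s ∈ Reach(σ), V(s) ≤ r} is bounded; and (v) for every r ∈ ℝ there exists ε_r > 0 such that for every s ∈ Reach(σ) with s ≠ ⊥ and V(s) ≤ r and every action μ ∈ Act(s), μ({s' : U(s') < U(s)}) ≥ ε_r. -/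
open scoped ENNReal Classical

/-!
Let `w n s` be the largest probability, over all schedulers, of avoiding `term` for `n` steps.
It is computed by backward induction, and every `w n` is a supermartingale. Since each state
has finitely many actions, the limit `L = lim w n` satisfies the Bellman equation with an
attained maximum, so the memoryless scheduler playing maximising actions avoids `term` forever
with probability at least `L σ`. Almost-sure termination therefore forces `L σ = 0`, and the
supermartingale property of `L` spreads this to every reachable state.

As there are only countably many reachable states, one can choose horizons `N j` such that
`∑ j, w (N j) s` converges at each of them; then `V = w 0 + ∑ j, w (N j)` is a supermartingale.
The variant `U s` is the first `k` with `w k s ≤ β k`, for thresholds `β k` decreasing from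
`1/2` to `1/4`. Every horizon below `U s` adds more than `1/4` to `V s`, so bounded `V` bounds
`U`; and at `U s = k + 1`, Markov's inequality for `w k` under any action shows that `U`
decreases with probability at least `1 - β (k + 1) / β k`.
-/

open Filter Topology

theorem exists_summable_comp_of_tendsto_zero {ι : Type*} [Countable ι] {R : Set ι}
    {f : ℕ → ι → ℝ} (hf : ∀ i ∈ R, Tendsto (fun n => f n i) atTop (𝓝 0)) :
    ∃ N : ℕ → ℕ, ∀ i ∈ R, Summable fun j => f (N j) i := by
  obtain ⟨e, he⟩ := Countable.exists_injective_nat ι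
  have hsmall (j : ℕ) : ∃ n, ∀ i ∈ R ∩ e ⁻¹' Set.Iic j, ‖f n i‖ ≤ (1 / 2) ^ j := by
    have hfin : (R ∩ e ⁻¹' Set.Iic j).Finite :=
      ((Set.finite_Iic j).preimage he.injOn).subset Set.inter_subset_right
    refine Eventually.exists (f := atTop) (hfin.eventually_all.mpr fun i hi => ?_)
    exact (tendsto_zero_iff_norm_tendsto_zero.mp (hf i hi.1)).eventually_le_const (by positivity)
  choose N hN using hsmall
  refine ⟨N, fun i hi => .of_norm_bounded_eventually_nat summable_geometric_two ?_⟩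
  filter_upwards [eventually_ge_atTop (e i)] with j hj using hN j i ⟨hi, hj⟩

namespace MDP

variable {S : Type}

section Expectation

variable {μ : PMF S}

theorem expect_eq_sum (hμ : μ.support.Finite) (f : S → ℝ) :
    expect μ f = ∑ x ∈ hμ.toFinset, (μ x).toReal * f x :=
  tsum_eq_sum fun x hx => by
    simp [(μ.apply_eq_zero_iff x).mpr (by simpa using hx)]

theorem sum_toReal_eq_one (hμ : μ.support.Finite) : ∑ x ∈ hμ.toFinset, (μ x).toReal = 1 := by
  rw [← ENNReal.toReal_sum fun x _ => μ.apply_ne_top x, ← tsum_eq_sum (L := .unconditional _),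
    μ.tsum_coe, ENNReal.toReal_one]
  intro x hx
  exact (μ.apply_eq_zero_iff x).mpr (by simpa using hx)

theorem expect_mono (hμ : μ.support.Finite) {f g : S → ℝ} (h : ∀ x ∈ μ.support, f x ≤ g x) :
    expect μ f ≤ expect μ g := by
  rw [expect_eq_sum hμ, expect_eq_sum hμ]
  exact Finset.sum_le_sum fun x hx =>
    mul_le_mul_of_nonneg_left (h x (hμ.mem_toFinset.mp hx)) ENNReal.toReal_nonneg

theorem expect_const (hμ : μ.support.Finite) (c : ℝ) : expect μ (fun _ => c) = c := by
  rw [expect_eq_sum hμ, ← Finset.sum_mul, sum_toReal_eq_one hμ, one_mul]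

theorem expect_nonneg (hμ : μ.support.Finite) {f : S → ℝ} (hf : 0 ≤ f) : 0 ≤ expect μ f := by
  simpa [expect_const hμ] using expect_mono hμ (f := fun _ => 0) fun x _ => hf x

theorem expect_add (hμ : μ.support.Finite) (f g : S → ℝ) :
    expect μ (f + g) = expect μ f + expect μ g := by
  simp only [expect_eq_sum hμ, Pi.add_apply, mul_add, Finset.sum_add_distrib]

theorem expect_pure (a : S) (f : S → ℝ) : expect (PMF.pure a) f = f a := by
  rw [expect, tsum_eq_single a fun x hx => by simp [PMF.pure_apply, hx]]
  simp

theorem toReal_mul_le_expect (hμ : μ.support.Finite) {f : S → ℝ} (hf : 0 ≤ f) (x : S) :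
    (μ x).toReal * f x ≤ expect μ f := by
  by_cases hx : x ∈ μ.support
  · rw [expect_eq_sum hμ]
    exact Finset.single_le_sum (fun y _ => mul_nonneg ENNReal.toReal_nonneg (hf y))
      (hμ.mem_toFinset.mpr hx)
  · simpa [(PMF.apply_eq_zero_iff μ x).mpr hx] using expect_nonneg hμ hf

theorem tendsto_expect (hμ : μ.support.Finite) {ι : Type*} {l : Filter ι} {f : ι → S → ℝ}
    {g : S → ℝ} (h : ∀ x ∈ μ.support, Tendsto (fun i => f i x) l (𝓝 (g x))) :
    Tendsto (fun i => expect μ (f i)) l (𝓝 (expect μ g)) := by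
  simp only [expect_eq_sum hμ]
  exact tendsto_finsetSum _ fun x hx => (h x (hμ.mem_toFinset.mp hx)).const_mul _

theorem hasSum_expect (hμ : μ.support.Finite) {f : ℕ → S → ℝ} {g : S → ℝ}
    (h : ∀ x ∈ μ.support, HasSum (fun j => f j x) (g x)) :
    HasSum (fun j => expect μ (f j)) (expect μ g) := by
  simp only [expect_eq_sum hμ]
  exact hasSum_sum fun x hx => (h x (hμ.mem_toFinset.mp hx)).mul_left _

/-- Markov's inequality, in the form `μ {f > a} ≤ 𝔼 f / a`. -/
theorem ofReal_one_sub_div_le_mass (hμ : μ.support.Finite) {f : S → ℝ} (hf : 0 ≤ f) {a b : ℝ}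
    (ha : 0 < a) (hb : expect μ f ≤ b) : ENNReal.ofReal (1 - b / a) ≤ mass μ {x | f x ≤ a} := by
  set F := hμ.toFinset
  set t := ∑ x ∈ F with f x ≤ a, (μ x).toReal
  have hsplit : t + ∑ x ∈ F with ¬f x ≤ a, (μ x).toReal = 1 := by
    rw [Finset.sum_filter_add_sum_filter_not, sum_toReal_eq_one hμ]
  have hmarkov : a * (1 - t) ≤ b :=
    calc a * (1 - t) = ∑ x ∈ F with ¬f x ≤ a, (μ x).toReal * a := by
          rw [← Finset.sum_mul, ← hsplit]; ring
      _ ≤ ∑ x ∈ F with ¬f x ≤ a, (μ x).toReal * f x :=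
          Finset.sum_le_sum fun x hx => mul_le_mul_of_nonneg_left
            (not_le.mp (Finset.mem_filter.mp hx).2).le ENNReal.toReal_nonneg
      _ ≤ ∑ x ∈ F, (μ x).toReal * f x :=
          Finset.sum_le_sum_of_subset_of_nonneg (Finset.filter_subset _ _)
            fun x _ _ => mul_nonneg ENNReal.toReal_nonneg (hf x)
      _ ≤ b := (expect_eq_sum hμ f).symm.trans_le hb
  have ht : ENNReal.ofReal t = ∑ x ∈ F, {x | f x ≤ a}.indicator μ x := by
    rw [ENNReal.ofReal_sum_of_nonneg fun x _ => ENNReal.toReal_nonneg, Finset.sum_filter]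
    exact Finset.sum_congr rfl fun x _ => by
      simp [Set.indicator_apply, ENNReal.ofReal_toReal (μ.apply_ne_top x)]
  calc ENNReal.ofReal (1 - b / a) ≤ ENNReal.ofReal t := by
        have : 1 - t ≤ b / a := by rw [le_div_iff₀ ha]; linarith
        gcongr
        linarith
    _ ≤ mass μ {x | f x ≤ a} := by
        rw [ht, mass, tsum_subtype]
        exact ENNReal.sum_le_tsum _

end Expectation

section Hitting

variable {M : MDP S}

theorem hitProbAux_add_ofReal_le_one (𝔰 : Scheduler M) {T : Set S} {g : S → ℝ} (hg0 : 0 ≤ g)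
    (hg1 : g ≤ 1) (hgT : ∀ s ∈ T, g s = 0) (hsub : ∀ hist s, g s ≤ expect (𝔰.choose hist s) g)
    (n : ℕ) (hist : List S) (s : S) :
    hitProbAux M 𝔰 T n hist s + ENNReal.ofReal (g s) ≤ 1 := by
  by_cases hs : s ∈ T
  · cases n <;> simp [hitProbAux, hs, hgT s hs]
  cases n with
  | zero => simpa [hitProbAux, hs] using hg1 s
  | succ n =>
    set μ := 𝔰.choose hist s
    have hμ := M.act_finSupp s μ (𝔰.choose_mem hist s)
    have hg : ENNReal.ofReal (g s) ≤ ∑' s', μ s' * ENNReal.ofReal (g s') := by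
      refine (ENNReal.ofReal_le_ofReal (hsub hist s)).trans ?_
      rw [expect_eq_sum hμ, ENNReal.ofReal_sum_of_nonneg fun x _ =>
        mul_nonneg ENNReal.toReal_nonneg (hg0 x)]
      refine (Finset.sum_le_sum fun x _ => ?_).trans (ENNReal.sum_le_tsum _)
      rw [ENNReal.ofReal_mul ENNReal.toReal_nonneg, ENNReal.ofReal_toReal (μ.apply_ne_top x)]
    rw [hitProbAux, if_neg hs]
    calc ∑' s', μ s' * hitProbAux M 𝔰 T n (hist ++ [s]) s' + ENNReal.ofReal (g s)
        ≤ ∑' s', μ s' * (hitProbAux M 𝔰 T n (hist ++ [s]) s' + ENNReal.ofReal (g s')) := by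
          simp only [mul_add, ENNReal.tsum_add]
          exact add_le_add le_rfl hg
      _ ≤ ∑' s', μ s' := ENNReal.tsum_le_tsum fun s' => mul_le_of_le_one_right'
          (hitProbAux_add_ofReal_le_one 𝔰 hg0 hg1 hgT hsub n _ s')
      _ = 1 := μ.tsum_coe

/-- Following the actions that do not decrease `g` avoids `term` with probability at least
`g σ`. -/
theorem AST.eq_zero_of_forall_exists_le_expect {term σ : S} (hAST : M.AST term σ) {g : S → ℝ}
    (hg0 : 0 ≤ g) (hg1 : g ≤ 1) (hterm : g term = 0)
    (hg : ∀ s, ∃ μ ∈ M.act s, g s ≤ expect μ g) : g σ = 0 := by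
  choose act hact_mem hact using hg
  let 𝔰 : Scheduler M := ⟨fun _ s => act s, fun _ s => hact_mem s⟩
  have hhit : hitProb M 𝔰 σ {term} ≤ 1 - ENNReal.ofReal (g σ) :=
    iSup_le fun n => ENNReal.le_sub_of_add_le_right ENNReal.ofReal_ne_top <|
      hitProbAux_add_ofReal_le_one 𝔰 hg0 hg1 (by simpa using hterm) (fun _ s => hact s) n [] σ
  have hone : 1 ≤ hitProb M 𝔰 σ {term} := hAST.symm.le.trans (iInf_le _ 𝔰)
  have : ENNReal.ofReal (g σ) = 0 := by
    by_contra hne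
    exact (hone.trans hhit).not_gt
      (ENNReal.sub_lt_self ENNReal.one_ne_top one_ne_zero hne)
  exact le_antisymm (ENNReal.ofReal_eq_zero.mp this) (hg0 σ)

end Hitting

/-- The largest probability, over all schedulers, of avoiding `term` during `n` steps,
computed by backward induction. -/
noncomputable def maxSurvival (M : MDP S) (term : S) : ℕ → S → ℝ
  | 0, s => if s = term then 0 else 1
  | n + 1, s => if s = term then 0 else
      (M.act s).sup' (M.act_nonempty s) fun μ => expect μ (maxSurvival M term n)

noncomputable def maxSurvivalLim (M : MDP S) (term : S) (s : S) : ℝ :=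
  ⨅ n, maxSurvival M term n s

section MaxSurvival

variable {M : MDP S} {term : S}

@[simp]
theorem maxSurvival_term (n : ℕ) : maxSurvival M term n term = 0 := by
  cases n <;> simp [maxSurvival]

theorem maxSurvival_zero_of_ne {s : S} (hs : s ≠ term) : maxSurvival M term 0 s = 1 := by
  simp [maxSurvival, hs]

theorem maxSurvival_succ_of_ne {s : S} (hs : s ≠ term) (n : ℕ) :
    maxSurvival M term (n + 1) s
      = (M.act s).sup' (M.act_nonempty s) fun μ => expect μ (maxSurvival M term n) := by
  simp [maxSurvival, hs]

theorem maxSurvival_nonneg (n : ℕ) : 0 ≤ maxSurvival M term n := by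
  induction n with
  | zero => intro s; simp only [maxSurvival]; split_ifs <;> norm_num
  | succ n ih =>
    intro s
    by_cases hs : s = term
    · simp [hs]
    obtain ⟨μ, hμ⟩ := M.act_nonempty s
    rw [Pi.zero_apply, maxSurvival_succ_of_ne hs]
    exact (expect_nonneg (M.act_finSupp s μ hμ) ih).trans
      (Finset.le_sup' (fun μ => expect μ (maxSurvival M term n)) hμ)

theorem maxSurvival_le_one (n : ℕ) : maxSurvival M term n ≤ 1 := by
  induction n with
  | zero => intro s; simp only [maxSurvival]; split_ifs <;> norm_num
  | succ n ih =>
    intro s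
    by_cases hs : s = term
    · simp [hs]
    rw [Pi.one_apply, maxSurvival_succ_of_ne hs]
    exact Finset.sup'_le _ _ fun μ hμ =>
      (expect_mono (M.act_finSupp s μ hμ) fun x _ => ih x).trans_eq
        (expect_const (M.act_finSupp s μ hμ) 1)

theorem expect_maxSurvival_le_succ (hterm : M.Absorbing term) {s : S} {μ : PMF S}
    (hμ : μ ∈ M.act s) (n : ℕ) :
    expect μ (maxSurvival M term n) ≤ maxSurvival M term (n + 1) s := by
  by_cases hs : s = term
  · rw [hs, show M.act term = {PMF.pure term} from hterm, Finset.mem_singleton] at hμ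
    simp [hs, hμ, expect_pure]
  rw [maxSurvival_succ_of_ne hs]
  exact Finset.le_sup' (fun μ => expect μ (maxSurvival M term n)) hμ

theorem maxSurvival_succ_le (n : ℕ) (s : S) :
    maxSurvival M term (n + 1) s ≤ maxSurvival M term n s := by
  induction n generalizing s with
  | zero =>
    by_cases hs : s = term
    · simp [hs]
    exact (maxSurvival_le_one 1 s).trans_eq (maxSurvival_zero_of_ne hs).symm
  | succ n ih =>
    by_cases hs : s = term
    · simp [hs]
    rw [maxSurvival_succ_of_ne hs, maxSurvival_succ_of_ne hs]
    exact Finset.sup'_mono_fun fun μ hμ => expect_mono (M.act_finSupp s μ hμ) fun x _ => ih x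

theorem antitone_maxSurvival (s : S) : Antitone fun n => maxSurvival M term n s :=
  antitone_nat_of_succ_le fun n => maxSurvival_succ_le n s

theorem expect_maxSurvival_le (hterm : M.Absorbing term) {s : S} {μ : PMF S}
    (hμ : μ ∈ M.act s) (n : ℕ) : expect μ (maxSurvival M term n) ≤ maxSurvival M term n s :=
  (expect_maxSurvival_le_succ hterm hμ n).trans (maxSurvival_succ_le n s)

theorem tendsto_maxSurvival (s : S) :
    Tendsto (fun n => maxSurvival M term n s) atTop (𝓝 (maxSurvivalLim M term s)) :=
  tendsto_atTop_ciInf (antitone_maxSurvival s) ⟨0, by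
    rintro _ ⟨n, rfl⟩
    exact maxSurvival_nonneg n s⟩

theorem maxSurvivalLim_nonneg : 0 ≤ maxSurvivalLim M term := fun s =>
  ge_of_tendsto' (tendsto_maxSurvival s) fun n => maxSurvival_nonneg n s

theorem maxSurvivalLim_le_one : maxSurvivalLim M term ≤ 1 := fun s =>
  le_of_tendsto' (tendsto_maxSurvival s) fun n => maxSurvival_le_one n s

@[simp]
theorem maxSurvivalLim_term : maxSurvivalLim M term term = 0 := by
  simp [maxSurvivalLim]

theorem tendsto_expect_maxSurvival {μ : PMF S} (hμ : μ.support.Finite) :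
    Tendsto (fun n => expect μ (maxSurvival M term n)) atTop
      (𝓝 (expect μ (maxSurvivalLim M term))) :=
  tendsto_expect hμ fun s _ => tendsto_maxSurvival s

theorem expect_maxSurvivalLim_le (hterm : M.Absorbing term) {s : S} {μ : PMF S}
    (hμ : μ ∈ M.act s) : expect μ (maxSurvivalLim M term) ≤ maxSurvivalLim M term s :=
  le_of_tendsto_of_tendsto' (tendsto_expect_maxSurvival (M.act_finSupp s μ hμ))
    (tendsto_maxSurvival s) fun n => expect_maxSurvival_le hterm hμ n

/-- The limit satisfies the Bellman equation, and since there are finitely many actions the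
maximum is attained. -/
theorem exists_le_expect_maxSurvivalLim (s : S) :
    ∃ μ ∈ M.act s, maxSurvivalLim M term s ≤ expect μ (maxSurvivalLim M term) := by
  by_cases hs : s = term
  · obtain ⟨μ, hμ⟩ := M.act_nonempty s
    exact ⟨μ, hμ, by simpa [hs] using expect_nonneg (M.act_finSupp s μ hμ) maxSurvivalLim_nonneg⟩
  have hbellman : maxSurvivalLim M term s
      = (M.act s).sup' (M.act_nonempty s) fun μ => expect μ (maxSurvivalLim M term) := by
    refine tendsto_nhds_unique ((tendsto_add_atTop_iff_nat 1).mpr (tendsto_maxSurvival s)) ?_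
    simp only [maxSurvival_succ_of_ne hs]
    exact Tendsto.finset_sup'_nhds_apply _ fun μ hμ =>
      tendsto_expect_maxSurvival (M.act_finSupp s μ hμ)
  obtain ⟨μ, hμ, heq⟩ := Finset.exists_mem_eq_sup' (M.act_nonempty s)
    fun μ => expect μ (maxSurvivalLim M term)
  exact ⟨μ, hμ, (hbellman.trans heq).le⟩

theorem maxSurvivalLim_eq_zero_of_reach (hterm : M.Absorbing term) {σ s : S}
    (hAST : M.AST term σ) (hs : M.Reach σ s) : maxSurvivalLim M term s = 0 := by
  induction hs with
  | refl =>
    exact AST.eq_zero_of_forall_exists_le_expect hAST maxSurvivalLim_nonneg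
      maxSurvivalLim_le_one maxSurvivalLim_term exists_le_expect_maxSurvivalLim
  | @step s s' μ _ hμ hs' ih =>
    have hμfin := M.act_finSupp s μ hμ
    have hle : (μ s').toReal * maxSurvivalLim M term s' ≤ 0 :=
      (toReal_mul_le_expect hμfin maxSurvivalLim_nonneg s').trans
        ((expect_maxSurvivalLim_le hterm hμ).trans_eq ih)
    have hpos : 0 < (μ s').toReal :=
      ENNReal.toReal_pos ((μ.mem_support_iff s').mp hs') (μ.apply_ne_top s')
    exact le_antisymm (nonpos_of_mul_nonpos_right hle hpos) (maxSurvivalLim_nonneg s')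

theorem tendsto_maxSurvival_zero_of_reach (hterm : M.Absorbing term) {σ s : S}
    (hAST : M.AST term σ) (hs : M.Reach σ s) :
    Tendsto (fun n => maxSurvival M term n s) atTop (𝓝 0) :=
  maxSurvivalLim_eq_zero_of_reach hterm hAST hs ▸ tendsto_maxSurvival s

end MaxSurvival

noncomputable def survivalSupermartingale (M : MDP S) (term : S) (N : ℕ → ℕ) (s : S) : ℝ :=
  maxSurvival M term 0 s + ∑' j, maxSurvival M term (N j) s

/-- Chosen to stay above `1/4` while consecutive ratios are `1 - 1 / (k + 2) ^ 2`. -/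
noncomputable def variantThreshold (k : ℕ) : ℝ := (k + 2) / (4 * (k + 1))

/-- `sInf ∅ = 0`, but the set is nonempty at every reachable state. -/
noncomputable def survivalVariant (M : MDP S) (term : S) (s : S) : ℕ :=
  sInf {k | maxSurvival M term k s ≤ variantThreshold k}

theorem quarter_lt_variantThreshold (k : ℕ) : 1 / 4 < variantThreshold k := by
  rw [variantThreshold, lt_div_iff₀ (by positivity)]
  linarith

theorem variantThreshold_zero : variantThreshold 0 = 1 / 2 := by
  norm_num [variantThreshold]

theorem one_sub_variantThreshold_succ_div (k : ℕ) :
    1 - variantThreshold (k + 1) / variantThreshold k = 1 / ((k : ℝ) + 2) ^ 2 := by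
  simp only [variantThreshold]
  push_cast
  field_simp
  ring

section Certificate

variable {M : MDP S} {term : S}

@[simp]
theorem survivalSupermartingale_term (N : ℕ → ℕ) : survivalSupermartingale M term N term = 0 := by
  simp [survivalSupermartingale]

theorem one_le_survivalSupermartingale (N : ℕ → ℕ) {s : S} (hs : s ≠ term) :
    1 ≤ survivalSupermartingale M term N s := by
  rw [survivalSupermartingale, maxSurvival_zero_of_ne hs, le_add_iff_nonneg_right]
  exact tsum_nonneg fun j => maxSurvival_nonneg _ s

theorem supermartingaleOn_survivalSupermartingale (hterm : M.Absorbing term) {σ : S}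
    {N : ℕ → ℕ} (hN : ∀ s, M.Reach σ s → Summable fun j => maxSurvival M term (N j) s) :
    M.SupermartingaleOn σ (survivalSupermartingale M term N) := by
  intro s hs μ hμ
  have hμfin := M.act_finSupp s μ hμ
  have htail : expect μ (fun x => ∑' j, maxSurvival M term (N j) x)
      ≤ ∑' j, maxSurvival M term (N j) s :=
    hasSum_le (fun j => expect_maxSurvival_le hterm hμ (N j))
      (hasSum_expect hμfin fun x hx => (hN x (hs.step μ hμ hx)).hasSum) (hN s hs).hasSum
  calc expect μ (survivalSupermartingale M term N)
      = expect μ (maxSurvival M term 0) + expect μ (fun x => ∑' j, maxSurvival M term (N j) x) :=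
        expect_add hμfin _ _
    _ ≤ survivalSupermartingale M term N s :=
        add_le_add (expect_maxSurvival_le hterm hμ 0) htail

@[simp]
theorem survivalVariant_term : survivalVariant M term term = 0 :=
  Nat.sInf_eq_zero.mpr <| .inl <| by
    simpa using (quarter_lt_variantThreshold 0).le.trans' (by norm_num)

theorem one_le_survivalVariant {s : S} (hs : s ≠ term)
    (hlim : Tendsto (fun n => maxSurvival M term n s) atTop (𝓝 0)) :
    1 ≤ survivalVariant M term s := by
  have hne : {k | maxSurvival M term k s ≤ variantThreshold k}.Nonempty := by
    obtain ⟨k, hk⟩ := (hlim.eventually_le_const (by norm_num : (0 : ℝ) < 1 / 4)).exists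
    exact ⟨k, hk.trans (quarter_lt_variantThreshold k).le⟩
  have h0 : 0 ∉ {k | maxSurvival M term k s ≤ variantThreshold k} := by
    norm_num [maxSurvival_zero_of_ne hs, variantThreshold_zero]
  exact Nat.one_le_iff_ne_zero.mpr fun h =>
    (Nat.sInf_eq_zero.mp h).elim h0 hne.ne_empty

/-- Below every horizon `n < survivalVariant s` the survival probability exceeds `1/4`, so each
such horizon `N j` contributes more than `1/4` to the supermartingale. -/
theorem survivalVariant_le_of_survivalSupermartingale_le {N : ℕ → ℕ} {s : S}
    (hsum : Summable fun j => maxSurvival M term (N j) s) {r : ℝ}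
    (hr : survivalSupermartingale M term N s ≤ r) :
    survivalVariant M term s ≤ (Finset.range (⌈4 * r⌉₊ + 1)).sup N := by
  by_contra! hlt
  have hbig (j : ℕ) (hj : j ∈ Finset.range (⌈4 * r⌉₊ + 1)) : 1 / 4 < maxSurvival M term (N j) s :=
    (quarter_lt_variantThreshold _).trans <| not_le.mp <|
      Nat.notMem_of_lt_sInf ((Finset.le_sup hj).trans_lt hlt)
  have hpartial := Finset.sum_lt_sum_of_nonempty Finset.nonempty_range_add_one hbig
  have hle := hsum.sum_le_tsum (Finset.range (⌈4 * r⌉₊ + 1)) fun j _ => maxSurvival_nonneg _ s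
  have h0 : 0 ≤ maxSurvival M term 0 s := maxSurvival_nonneg 0 s
  simp only [Finset.sum_const, Finset.card_range, nsmul_eq_mul] at hpartial
  rw [survivalSupermartingale] at hr
  push_cast at hpartial
  linarith [Nat.le_ceil (4 * r)]

/-- Markov's inequality for `maxSurvival k`, where `survivalVariant s = k + 1`. -/
theorem ofReal_le_mass_survivalVariant_lt (hterm : M.Absorbing term) {s : S} {K : ℕ}
    (hpos : 0 < survivalVariant M term s) (hK : survivalVariant M term s ≤ K) {μ : PMF S}
    (hμ : μ ∈ M.act s) :
    ENNReal.ofReal (1 / ((K : ℝ) + 1) ^ 2)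
      ≤ mass μ {s' | survivalVariant M term s' < survivalVariant M term s} := by
  obtain ⟨k, hk⟩ := Nat.exists_eq_add_of_le' hpos
  have hmem : maxSurvival M term (k + 1) s ≤ variantThreshold (k + 1) :=
    hk ▸ Nat.sInf_mem (Nat.nonempty_of_pos_sInf hpos)
  have hsub : {s' | maxSurvival M term k s' ≤ variantThreshold k}
      ⊆ {s' | survivalVariant M term s' < survivalVariant M term s} := fun s' hs' => by
    show survivalVariant M term s' < survivalVariant M term s
    rw [hk]
    exact Nat.lt_succ_of_le (Nat.sInf_le hs')
  have hKk : (k : ℝ) + 2 ≤ K + 1 := by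
    have : k + 1 ≤ K := hk ▸ hK
    exact_mod_cast Nat.add_le_add_right this 1
  calc ENNReal.ofReal (1 / ((K : ℝ) + 1) ^ 2)
      ≤ ENNReal.ofReal (1 - variantThreshold (k + 1) / variantThreshold k) := by
        rw [one_sub_variantThreshold_succ_div]
        gcongr
    _ ≤ mass μ {s' | maxSurvival M term k s' ≤ variantThreshold k} :=
        ofReal_one_sub_div_le_mass (M.act_finSupp s μ hμ) (maxSurvival_nonneg k)
          ((quarter_lt_variantThreshold k).trans' (by norm_num))
          ((expect_maxSurvival_le_succ hterm hμ k).trans hmem)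
    _ ≤ _ := ENNReal.tsum_mono_subtype μ hsub

end Certificate

end MDP

/-- **Completeness of the martingale rule for AST.** If `M` is almost surely terminating
from `σ`, then there exist a supermartingale `V` (zero at the terminal state, positive at
all other reachable states) and a variant `U : S → ℕ` (zero exactly at the terminal state
on reachable states) such that on every sublevel set of `V` the values of `U` are bounded
and `U` decreases with probability bounded away from zero. -/
theorem martingale_rule_complete {S : Type} [Countable S] (M : MDP S) (term σ : S)
    (hterm : M.Absorbing term) (hAST : M.AST term σ) :
    ∃ (V : S → ℝ) (U : S → ℕ),
      V term = 0 ∧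
      (∀ s, M.Reach σ s → s ≠ term → 0 < V s) ∧
      M.SupermartingaleOn σ V ∧
      U term = 0 ∧
      (∀ s, M.Reach σ s → s ≠ term → 1 ≤ U s) ∧
      (∀ r : ℝ, BddAbove {u : ℕ | ∃ s, M.Reach σ s ∧ V s ≤ r ∧ U s = u}) ∧
      (∀ r : ℝ, ∃ ε : ℝ, 0 < ε ∧ ∀ s, M.Reach σ s → s ≠ term → V s ≤ r →
        ∀ μ ∈ M.act s, ENNReal.ofReal ε ≤ MDP.mass μ {s' | U s' < U s}) := by
  obtain ⟨N, hN⟩ := exists_summable_comp_of_tendsto_zero (R := {s | M.Reach σ s})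
    fun s hs => MDP.tendsto_maxSurvival_zero_of_reach hterm hAST hs
  have hU (s : S) (hs : M.Reach σ s) (hne : s ≠ term) : 1 ≤ MDP.survivalVariant M term s :=
    MDP.one_le_survivalVariant hne (MDP.tendsto_maxSurvival_zero_of_reach hterm hAST hs)
  have hbound (r : ℝ) (s : S) (hs : M.Reach σ s) (hr : MDP.survivalSupermartingale M term N s ≤ r) :
      MDP.survivalVariant M term s ≤ (Finset.range (⌈4 * r⌉₊ + 1)).sup N :=
    MDP.survivalVariant_le_of_survivalSupermartingale_le (hN s hs) hr
  refine ⟨MDP.survivalSupermartingale M term N, MDP.survivalVariant M term,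
    MDP.survivalSupermartingale_term N,
    fun s _ hne => one_pos.trans_le (MDP.one_le_survivalSupermartingale N hne),
    MDP.supermartingaleOn_survivalSupermartingale hterm hN, MDP.survivalVariant_term, hU,
    fun r => ⟨_, fun _ ⟨s, hs, hr, hu⟩ => hu ▸ hbound r s hs hr⟩,
    fun r => ⟨_, ?_, fun s hs hne hr μ hμ =>
      MDP.ofReal_le_mass_survivalVariant_lt hterm (hU s hs hne) (hbound r s hs hr) hμ⟩⟩
  positivity
end
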